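/- arXiv:2410.11572 — 6 statements merged into one kernel-verified Lean document; each statement's English description precedes it below -/
import Mathlib

section
/- For any two transfer flows tf1 and tf2, the product set tf1 ⊗ tf2 is upward-closed with respect to the order ⪯ on transfer flows. -/
/-- ℕ extended with an extra element `#` (represented by `none`),
which is an identity for addition and incomparable with integers. -/
abbrev NS := Option ℕ

def NS.sharp : NS := none

def NS.add : NS → NS → NS
  | none, x => x
  | some a, none => some a
  | some a, some b => some (a + b)

instance : Add NS := ⟨NS.add⟩
instance : Zero NS := ⟨none⟩

instance : AddCommMonoid NS where
  add_assoc a b c := by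
    show NS.add (NS.add a b) c = NS.add a (NS.add b c)
    cases a <;> cases b <;> cases c <;> simp [NS.add, Nat.add_assoc]
  zero_add a := by cases a <;> rfl
  add_zero a := by cases a <;> rfl
  add_comm a b := by
    show NS.add a b = NS.add b a
    cases a <;> cases b <;> simp [NS.add, Nat.add_comm]
  nsmul := nsmulRec

/-- The order on `NS`: `#` is only comparable with `#`. -/
def NS.le : NS → NS → Prop
  | none, none => True
  | some a, some b => a ≤ b
  | _, _ => False

def NS.lt (x y : NS) : Prop := NS.le x y ∧ x ≠ y

/-- A transfer flow: an agent part `f` and a control part `(src, dst)`. -/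
structure TF (Q L : Type) where
  f : Q → Q → NS
  src : L
  dst : L

/-- The order `⪯` on transfer flows. -/
def TF.le {Q L : Type} (t1 t2 : TF Q L) : Prop :=
  t1.src = t2.src ∧ t1.dst = t2.dst ∧ ∀ q q', NS.le (t1.f q q') (t2.f q q')

/-- The product `tf1 ⊗ tf2` of two transfer flows. -/
def TF.prod {Q L : Type} [Fintype Q] (t1 t2 : TF Q L) : Set (TF Q L) :=
  { t | t1.dst = t2.src ∧ t.src = t1.src ∧ t.dst = t2.dst ∧
    ∃ H : Q → Q → Q → NS,
      (∀ q1 q3, (∑ q2, H q1 q2 q3) = t.f q1 q3) ∧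
      (∀ q1 q2, NS.le (t1.f q1 q2) (∑ q3, H q1 q2 q3)) ∧
      (∀ q2 q3, NS.le (t2.f q2 q3) (∑ q1, H q1 q2 q3)) }

/-- The weight of a transfer flow: `#` contributes nothing. -/
def TF.weight {Q L : Type} [Fintype Q] (t : TF Q L) : ℕ :=
  ∑ q, ∑ q', (t.f q q').getD 0

/-- Minimality with respect to `⪯` within a set of transfer flows. -/
def MinimalIn {Q L : Type} (S : Set (TF Q L)) (t : TF Q L) : Prop :=
  t ∈ S ∧ ∀ t' ∈ S, TF.le t' t → t' = t

/-! Enlarging the witness `H` pointwise preserves both column inequalities, so it suffices to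
raise each row sum `∑ q2, H q1 q2 q3` from `tf.f q1 q3` to `tf'.f q1 q3`, which can be done by
increasing a single entry of the row. -/

namespace NS

@[simp] lemma none_add (x : NS) : none + x = x := rfl

@[simp] lemma add_none (x : NS) : x + none = x := by cases x <;> rfl

@[simp] lemma some_add_some (a b : ℕ) : (some a + some b : NS) = some (a + b) := rfl

lemma le_refl (x : NS) : NS.le x x := by
  cases x <;> simp [NS.le]

lemma le_trans {x y z : NS} (hxy : NS.le x y) (hyz : NS.le y z) : NS.le x z := by
  cases x <;> cases y <;> cases z <;> simp_all [NS.le]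
  omega

lemma add_le_add {x y x' y' : NS} (hx : NS.le x y) (hx' : NS.le x' y') :
    NS.le (x + x') (y + y') := by
  cases x <;> cases y <;> cases x' <;> cases y' <;>
    simp_all [NS.le]
  omega

lemma sum_le_sum {ι : Type*} {s : Finset ι} {f g : ι → NS} (h : ∀ i ∈ s, NS.le (f i) (g i)) :
    NS.le (∑ i ∈ s, f i) (∑ i ∈ s, g i) := by
  induction s using Finset.cons_induction with
  | empty => exact le_refl 0
  | cons a s ha ih =>
    simp only [Finset.sum_cons]
    exact add_le_add (h a (s.mem_cons_self a)) (ih fun i hi => h i (Finset.mem_cons_of_mem hi))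

lemma le_add {x d : NS} (hd : x = 0 → d = 0) : NS.le x (x + d) := by
  rcases x with _ | a
  · rw [hd rfl]; exact le_refl _
  · cases d <;> simp [NS.le]

lemma exists_add_of_le {x y : NS} (h : NS.le x y) : ∃ d, y = x + d ∧ (x = 0 → d = 0) := by
  rcases x with _ | a <;> rcases y with _ | b <;> simp only [NS.le] at h
  · exact ⟨0, rfl, fun _ => rfl⟩
  · refine ⟨some (b - a), ?_, nofun⟩
    rw [some_add_some, Nat.add_sub_cancel' h]

/-- Put the whole increase on one term other than `#`; if there is none, the sum is `#` and so
is the increase. -/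
lemma exists_le_sum_eq_of_sum_le {ι : Type*} [Fintype ι] {g : ι → NS} {y : NS}
    (h : NS.le (∑ i, g i) y) : ∃ g' : ι → NS, (∀ i, NS.le (g i) (g' i)) ∧ ∑ i, g' i = y := by
  classical
  obtain ⟨d, rfl, hd⟩ := exists_add_of_le h
  by_cases hg : ∀ i, g i = 0
  · refine ⟨g, fun i => le_refl _, ?_⟩
    rw [hd (Finset.sum_eq_zero fun i _ => hg i), add_zero]
  · push Not at hg
    obtain ⟨j, hj⟩ := hg
    refine ⟨fun i => g i + (Pi.single j d : ι → NS) i, fun i => le_add fun hi => ?_, ?_⟩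
    · exact Pi.single_eq_of_ne (M := fun _ => NS) (fun hij => hj (by rwa [← hij])) d
    · rw [Finset.sum_add_distrib, Finset.sum_pi_single']
      simp

end NS

/-- For any transfer flows `tf1`, `tf2`, the product set `tf1 ⊗ tf2` is
upward-closed with respect to the order `⪯`. -/
theorem prod_upward_closed {Q L : Type} [Fintype Q]
    (tf1 tf2 : TF Q L) :
    ∀ tf ∈ TF.prod tf1 tf2, ∀ tf', TF.le tf tf' → tf' ∈ TF.prod tf1 tf2 := by
  rintro tf ⟨h12, hsrc, hdst, H, hrow, hcol1, hcol2⟩ tf' ⟨hs, hd, hle⟩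
  have hrow_le (q1 q3 : Q) : NS.le (∑ q2, H q1 q2 q3) (tf'.f q1 q3) := hrow q1 q3 ▸ hle q1 q3
  choose G hHG hG using fun q1 q3 => NS.exists_le_sum_eq_of_sum_le (hrow_le q1 q3)
  refine ⟨h12, hs ▸ hsrc, hd ▸ hdst, fun q1 q2 q3 => G q1 q3 q2, hG, ?_, ?_⟩
  · exact fun q1 q2 => NS.le_trans (hcol1 q1 q2) (NS.sum_le_sum fun q3 _ => hHG q1 q3 q2)
  · exact fun q2 q3 => NS.le_trans (hcol2 q2 q3) (NS.sum_le_sum fun q1 _ => hHG q1 q3 q2)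
end

section
/- If tf1' ⪯ tf1 and tf2' ⪯ tf2 are transfer flows, then tf1 ⊗ tf2 ⊆ tf1' ⊗ tf2'. (Smaller transfer flows are more powerful.) -/

theorem NS.le_trans_s4 {a b c : NS} (h1 : NS.le a b) (h2 : NS.le b c) : NS.le a c := by
  cases a <;> cases b <;> cases c <;> simp_all [NS.le] <;> omega

/-- Smaller transfer flows are more powerful: if `tf1' ⪯ tf1` and `tf2' ⪯ tf2`
then `tf1 ⊗ tf2 ⊆ tf1' ⊗ tf2'`. -/
theorem prod_antitone {Q L : Type} [Fintype Q]
    (tf1 tf1' tf2 tf2' : TF Q L)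
    (h1 : TF.le tf1' tf1) (h2 : TF.le tf2' tf2) :
    TF.prod tf1 tf2 ⊆ TF.prod tf1' tf2' := by
  intro t ht
  obtain ⟨hds, hs, hd, H, hH1, hH2, hH3⟩ := ht
  obtain ⟨e1, e2, hle1⟩ := h1
  obtain ⟨f1, f2, hle2⟩ := h2
  refine ⟨by rw [e2, f1]; exact hds, by rw [e1]; exact hs, by rw [f2]; exact hd, H, hH1, ?_, ?_⟩
  · intro q1 q2; exact NS.le_trans_s4 (hle1 q1 q2) (hH2 q1 q2)
  · intro q2 q3; exact NS.le_trans_s4 (hle2 q2 q3) (hH3 q2 q3)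
end

section
/- The product of transfer flows is associative: for all transfer flows tf1, tf2, tf3, we have (tf1 ⊗ tf2) ⊗ tf3 = tf1 ⊗ (tf2 ⊗ tf3), where the product is extended to sets by taking unions over all pairs of elements. -/
/-- The product extended to sets of transfer flows. -/
def setProd {Q L : Type} [Fintype Q] (F F' : Set (TF Q L)) : Set (TF Q L) :=
  ⋃ t1 ∈ F, ⋃ t2 ∈ F', TF.prod t1 t2

section Aux

lemma NS.zero_def : (0 : NS) = none := rfl

lemma NS.add_def (x y : NS) : x + y = NS.add x y := rfl

lemma NS.le_refl_s5 (x : NS) : NS.le x x := by cases x <;> simp [NS.le]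

lemma NS.le_trans_s5 {x y z : NS} (h1 : NS.le x y) (h2 : NS.le y z) : NS.le x z := by
  cases x <;> cases y <;> cases z <;> simp_all [NS.le] <;> omega

lemma NS.add_le_add_s5 {a b c d : NS} (h1 : NS.le a b) (h2 : NS.le c d) :
    NS.le (a + c) (b + d) := by
  cases a <;> cases b <;> cases c <;> cases d <;>
    simp_all [NS.le, NS.add_def, NS.add] <;> omega

lemma NS.sum_le_sum_s5 {ι : Type*} {s : Finset ι} {f g : ι → NS}
    (h : ∀ i ∈ s, NS.le (f i) (g i)) : NS.le (∑ i ∈ s, f i) (∑ i ∈ s, g i) := by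
  induction s using Finset.cons_induction with
  | empty => exact NS.le_refl_s5 _
  | cons i s hi ih =>
    rw [Finset.sum_cons, Finset.sum_cons]
    exact NS.add_le_add_s5 (h i (Finset.mem_cons_self ..))
      (ih fun j hj => h j (Finset.mem_cons_of_mem hj))

lemma NS.add_eq_none {x y : NS} : x + y = none ↔ x = none ∧ y = none := by
  cases x <;> cases y <;> simp [NS.add_def, NS.add]

lemma NS.sum_eq_none {ι : Type*} {s : Finset ι} {f : ι → NS} :
    (∑ i ∈ s, f i) = none ↔ ∀ i ∈ s, f i = none := by
  induction s using Finset.cons_induction with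
  | empty => simp [NS.zero_def]
  | cons i s hi ih => simp [Finset.sum_cons, NS.add_eq_none, ih]

lemma NS.getD_add (x y : NS) : (x + y).getD 0 = x.getD 0 + y.getD 0 := by
  cases x <;> cases y <;> simp [NS.add_def, NS.add]

lemma NS.getD_sum {ι : Type*} {s : Finset ι} {f : ι → NS} :
    (∑ i ∈ s, f i).getD 0 = ∑ i ∈ s, (f i).getD 0 := by
  induction s using Finset.cons_induction with
  | empty => rfl
  | cons i s hi ih => simp [Finset.sum_cons, NS.getD_add, ih]

lemma NS.sum_eq_some {ι : Type*} {s : Finset ι} {f : ι → NS}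
    (h : ∃ i ∈ s, f i ≠ none) :
    (∑ i ∈ s, f i) = some (∑ i ∈ s, (f i).getD 0) := by
  have hne : (∑ i ∈ s, f i) ≠ none := by
    intro hn
    obtain ⟨i, his, hfi⟩ := h
    exact hfi (NS.sum_eq_none.mp hn i his)
  obtain ⟨v, hv⟩ := Option.ne_none_iff_exists'.mp hne
  have hg := NS.getD_sum (s := s) (f := f)
  rw [hv] at hg ⊢
  simp only [Option.getD_some] at hg
  rw [hg]

lemma exists_nat_matrix {ι : Type*} [Fintype ι] [DecidableEq ι] :
    ∀ (n : ℕ) (r m : ι → ℕ), (∑ i, r i = n) → (∑ j, m j = n) →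
    ∃ M : ι → ι → ℕ, (∀ i, ∑ j, M i j = r i) ∧ (∀ j, ∑ i, M i j = m j) := by
  intro n
  induction n with
  | zero =>
    intro r m hr hm
    refine ⟨fun _ _ => 0, fun i => ?_, fun j => ?_⟩
    · simp [(Finset.sum_eq_zero_iff.mp hr i (Finset.mem_univ i))]
    · simp [(Finset.sum_eq_zero_iff.mp hm j (Finset.mem_univ j))]
  | succ n ih =>
    intro r m hr hm
    have hi : ∃ i, r i ≠ 0 := by
      by_contra hc
      push_neg at hc
      simp [hc] at hr
    obtain ⟨i₀, hi₀⟩ := hi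
    have hj : ∃ j, m j ≠ 0 := by
      by_contra hc
      push_neg at hc
      simp [hc] at hm
    obtain ⟨j₀, hj₀⟩ := hj
    have hersum : r i₀ + ∑ i ∈ Finset.univ.erase i₀, r i = n + 1 := by
      rw [Finset.add_sum_erase _ _ (Finset.mem_univ i₀)]; exact hr
    have hecsum : m j₀ + ∑ j ∈ Finset.univ.erase j₀, m j = n + 1 := by
      rw [Finset.add_sum_erase _ _ (Finset.mem_univ j₀)]; exact hm
    have hr' : ∑ i, Function.update r i₀ (r i₀ - 1) i = n := by
      rw [Finset.sum_update_of_mem (Finset.mem_univ i₀), Finset.sdiff_singleton_eq_erase]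
      omega
    have hm' : ∑ j, Function.update m j₀ (m j₀ - 1) j = n := by
      rw [Finset.sum_update_of_mem (Finset.mem_univ j₀), Finset.sdiff_singleton_eq_erase]
      omega
    obtain ⟨M', hMr, hMc⟩ := ih _ _ hr' hm'
    refine ⟨fun i j => M' i j + (if i = i₀ then 1 else 0) * (if j = j₀ then 1 else 0),
      fun i => ?_, fun j => ?_⟩
    · rw [Finset.sum_add_distrib, hMr i, ← Finset.mul_sum, Finset.sum_ite_eq' Finset.univ j₀]
      by_cases hii : i = i₀ <;> simp [Function.update, hii] <;> omega
    · rw [Finset.sum_add_distrib, hMc j]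
      have : ∀ i, (if i = i₀ then 1 else 0) * (if j = j₀ then 1 else 0)
          = (if i = i₀ then (if j = j₀ then 1 else 0) else 0) := by
        intro i; by_cases hii : i = i₀ <;> simp [hii]
      rw [Finset.sum_congr rfl (fun i _ => this i), Finset.sum_ite_eq' Finset.univ i₀]
      by_cases hjj : j = j₀ <;> simp [Function.update, hjj] <;> omega

lemma NS.pairing {Q : Type} [Fintype Q] (a b : Q → NS)
    (h : NS.le (∑ i, a i) (∑ j, b j)) :
    ∃ c : Q → Q → NS, (∀ j, (∑ i, c i j) = b j) ∧ (∀ i, NS.le (a i) (∑ j, c i j)) := by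
  classical
  rcases ha : (∑ i, a i) with _ | s
  · -- all of a and b are `#`
    have hb : (∑ j, b j) = none := by
      rcases hb' : (∑ j, b j) with _ | t
      · rfl
      · rw [ha, hb'] at h; exact h.elim
    have hA : ∀ i, a i = none := fun i => NS.sum_eq_none.mp ha i (Finset.mem_univ i)
    have hB : ∀ j, b j = none := fun j => NS.sum_eq_none.mp hb j (Finset.mem_univ j)
    refine ⟨fun _ _ => none, fun j => ?_, fun i => ?_⟩
    · rw [hB j]; exact NS.sum_eq_none.mpr (fun _ _ => rfl)
    · rw [hA i]
      have : (∑ _j : Q, (none : NS)) = none := NS.sum_eq_none.mpr (fun _ _ => rfl)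
      rw [this]; trivial
  · rcases hb : (∑ j, b j) with _ | t
    · rw [ha, hb] at h; exact h.elim
    · rw [ha, hb] at h
      have hst : s ≤ t := h
      have haex : ∃ i, a i ≠ none := by
        by_contra hc
        push_neg at hc
        rw [NS.sum_eq_none.mpr (fun i _ => hc i)] at ha
        simp at ha
      obtain ⟨i₀, hi₀⟩ := haex
      have hbex : ∃ j, b j ≠ none := by
        by_contra hc
        push_neg at hc
        rw [NS.sum_eq_none.mpr (fun j _ => hc j)] at hb
        simp at hb
      obtain ⟨j₀, hj₀⟩ := hbex
      have hs : ∑ i, (a i).getD 0 = s := by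
        have := NS.getD_sum (s := Finset.univ) (f := a); rw [ha] at this; simpa using this.symm
      have ht : ∑ j, (b j).getD 0 = t := by
        have := NS.getD_sum (s := Finset.univ) (f := b); rw [hb] at this; simpa using this.symm
      set r : Q → ℕ := fun i => (a i).getD 0 + (if i = i₀ then t - s else 0) with hrdef
      set m : Q → ℕ := fun j => (b j).getD 0 with hmdef
      have hrsum : ∑ i, r i = t := by
        rw [hrdef]
        rw [Finset.sum_add_distrib, hs, Finset.sum_ite_eq' Finset.univ i₀]
        simp
        omega
      have hmsum : ∑ j, m j = t := ht
      obtain ⟨M, hMr, hMc⟩ := exists_nat_matrix t r m hrsum hmsum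
      have hrow0 : ∀ i, a i = none → ∀ j, M i j = 0 := by
        intro i hin j
        have hne : i ≠ i₀ := fun e => hi₀ (e ▸ hin)
        have hri : r i = 0 := by simp [hrdef, hin, hne]
        exact Finset.sum_eq_zero_iff.mp (by rw [hMr i, hri]) j (Finset.mem_univ j)
      have hcol0 : ∀ j, b j = none → ∀ i, M i j = 0 := by
        intro j hjn i
        have hmj : m j = 0 := by simp [hmdef, hjn]
        exact Finset.sum_eq_zero_iff.mp (by rw [hMc j, hmj]) i (Finset.mem_univ i)
      refine ⟨fun i j => if a i = none ∨ b j = none then none else some (M i j),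
        fun j => ?_, fun i => ?_⟩
      · by_cases hbj : b j = none
        · rw [hbj]
          exact NS.sum_eq_none.mpr (fun i _ => by simp [hbj])
        · rw [NS.sum_eq_some ⟨i₀, Finset.mem_univ i₀, by simp [hi₀, hbj]⟩]
          have hgd : ∀ i, ((if a i = none ∨ b j = none then none else some (M i j)) : NS).getD 0
              = M i j := by
            intro i
            by_cases hai : a i = none
            · simp [hai, (hrow0 i hai j).symm]
            · simp [hai, hbj]
          rw [Finset.sum_congr rfl (fun i _ => hgd i), hMc j]
          rcases hbv : b j with _ | v
          · exact absurd hbv hbj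
          · simp [hmdef, hbv]
      · by_cases hai : a i = none
        · have hz : (∑ j, ((if a i = none ∨ b j = none then none else some (M i j)) : NS))
              = none := NS.sum_eq_none.mpr (fun j _ => by simp [hai])
          rw [hai, hz]; trivial
        · rw [NS.sum_eq_some ⟨j₀, Finset.mem_univ j₀, by simp [hai, hj₀]⟩]
          have hgd : ∀ j, ((if a i = none ∨ b j = none then none else some (M i j)) : NS).getD 0
              = M i j := by
            intro j
            by_cases hbj : b j = none
            · simp [hbj, (hcol0 j hbj i).symm]
            · simp [hai, hbj]
          rw [Finset.sum_congr rfl (fun j _ => hgd j), hMr i]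
          rcases hav : a i with _ | n
          · exact absurd hav hai
          · show NS.le (some n) (some (r i))
            have : n = (a i).getD 0 := by rw [hav]; rfl
            show n ≤ r i
            rw [this, hrdef]
            exact Nat.le_add_right _ _

lemma NS.quad {Q : Type} [Fintype Q] (H G : Q → Q → Q → NS)
    (h : ∀ x1 x3, NS.le (∑ x2, H x1 x2 x3) (∑ x4, G x1 x3 x4)) :
    ∃ K : Q → Q → Q → Q → NS,
      (∀ x1 x3 x4, (∑ x2, K x1 x2 x3 x4) = G x1 x3 x4) ∧
      (∀ x1 x2 x3, NS.le (H x1 x2 x3) (∑ x4, K x1 x2 x3 x4)) := by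
  choose c hc1 hc2 using fun x1 x3 =>
    NS.pairing (fun x2 => H x1 x2 x3) (fun x4 => G x1 x3 x4) (h x1 x3)
  exact ⟨fun x1 x2 x3 x4 => c x1 x3 x2 x4, fun x1 x3 x4 => hc1 x1 x3 x4,
    fun x1 x2 x3 => hc2 x1 x3 x2⟩

end Aux

/-- Associativity of the product of transfer flows:
`(tf1 ⊗ tf2) ⊗ tf3 = tf1 ⊗ (tf2 ⊗ tf3)`, the product being extended to sets. -/
theorem prod_assoc {Q L : Type} [Fintype Q]
    (tf1 tf2 tf3 : TF Q L) :
    setProd (TF.prod tf1 tf2) {tf3} = setProd {tf1} (TF.prod tf2 tf3) := by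
  ext tf
  simp only [setProd, Set.mem_iUnion, Set.mem_singleton_iff, exists_prop, exists_eq_left,
    exists_eq_left']
  constructor
  · rintro ⟨t12, ⟨hd1, hs1, he1, H, hH1, hH2, hH3⟩, hd2, hs2, he2, G, hG1, hG2, hG3⟩
    obtain ⟨K, hK1, hK2⟩ := NS.quad H G (fun x1 x3 => by rw [hH1 x1 x3]; exact hG2 x1 x3)
    refine ⟨⟨fun q2 q4 => ∑ q3, ∑ q1, K q1 q2 q3 q4, tf2.src, tf3.dst⟩,
      ⟨he1.symm.trans hd2, rfl, rfl, fun q2 q3 q4 => ∑ q1, K q1 q2 q3 q4,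
        fun q2 q4 => rfl, ?_, ?_⟩,
      hd1, hs2.trans hs1, he2, fun q1 q2 q4 => ∑ q3, K q1 q2 q3 q4, ?_, ?_, ?_⟩
    · intro q2 q3
      rw [Finset.sum_comm]
      exact NS.le_trans_s5 (hH3 q2 q3) (NS.sum_le_sum_s5 fun q1 _ => hK2 q1 q2 q3)
    · intro q3 q4
      rw [Finset.sum_comm, Finset.sum_congr rfl (fun q1 _ => hK1 q1 q3 q4)]
      exact hG3 q3 q4
    · intro q1 q4
      rw [Finset.sum_comm, Finset.sum_congr rfl (fun q3 _ => hK1 q1 q3 q4)]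
      exact hG1 q1 q4
    · intro q1 q2
      rw [Finset.sum_comm]
      exact NS.le_trans_s5 (hH2 q1 q2) (NS.sum_le_sum_s5 fun q3 _ => hK2 q1 q2 q3)
    · intro q2 q4
      show NS.le (∑ q3, ∑ q1, K q1 q2 q3 q4) _
      rw [Finset.sum_comm]
      exact NS.le_refl_s5 _
  · rintro ⟨t23, ⟨hd1, hs1, he1, H', hH1, hH2, hH3⟩, hd2, hs2, he2, G', hG1, hG2, hG3⟩
    obtain ⟨K', hK1, hK2⟩ := NS.quad H' (fun x1 x3 x4 => G' x4 x1 x3)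
      (fun x1 x3 => by rw [hH1 x1 x3]; exact hG3 x1 x3)
    refine ⟨⟨fun q1 q3 => ∑ q2, ∑ q4, K' q2 q3 q4 q1, tf1.src, tf2.dst⟩,
      ⟨hd2.trans hs1, rfl, rfl, fun q1 q2 q3 => ∑ q4, K' q2 q3 q4 q1,
        fun q1 q3 => rfl, ?_, ?_⟩,
      hd1, hs2, he2.trans he1, fun q1 q3 q4 => ∑ q2, K' q2 q3 q4 q1, ?_, ?_, ?_⟩
    · intro q1 q2
      rw [Finset.sum_comm, Finset.sum_congr rfl (fun q4 _ => hK1 q2 q4 q1)]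
      exact hG2 q1 q2
    · intro q2 q3
      rw [Finset.sum_comm]
      exact NS.le_trans_s5 (hH2 q2 q3) (NS.sum_le_sum_s5 fun q4 _ => hK2 q2 q3 q4)
    · intro q1 q4
      rw [Finset.sum_comm, Finset.sum_congr rfl (fun q2 _ => hK1 q2 q4 q1)]
      exact hG1 q1 q4
    · intro q1 q3
      show NS.le (∑ q2, ∑ q4, K' q2 q3 q4 q1) _
      rw [Finset.sum_comm]
      exact NS.le_refl_s5 _
    · intro q3 q4
      rw [Finset.sum_comm]
      exact NS.le_trans_s5 (hH3 q3 q4) (NS.sum_le_sum_s5 fun q2 _ => hK2 q2 q3 q4)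
end

section
/- Every minimal element of tf1 ⊗ tf2 has weight at most |tf1| + |tf2|, where the weight of a transfer flow (f, ℓ, ℓ') is ∑_{q,q'} f(q,q') (with # contributing nothing, as # + x = x). -/
/-
Fix a witness `H` of a minimal `tf ∈ tf1 ⊗ tf2`. Lowering a positive entry `H(q1,q2,q3)` by one
would give a witness of a strictly smaller element of the product unless it breaks a constraint, so
by minimality either `∑_{q3} H(q1,q2,q3) = f1(q1,q2)` or `∑_{q1} H(q1,q2,q3) = f2(q2,q3)`.
Charging every positive entry to such a tight margin bounds `∑ H = |tf|` by `|tf1| + |tf2|`.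
-/

namespace NS

lemma add_def_s6 (a b : NS) : a + b = NS.add a b := rfl

lemma le_iff {x y : NS} : NS.le x y ↔ (x = none ↔ y = none) ∧ x.getD 0 ≤ y.getD 0 := by
  cases x <;> cases y <;> simp [NS.le]

lemma map_le {g : ℕ → ℕ} (hg : ∀ n, g n ≤ n) (x : NS) : NS.le (x.map g) x := by
  cases x <;> simp [NS.le, hg]

lemma getD_map_sub (x : NS) (d : ℕ) : (x.map (· - d)).getD 0 = x.getD 0 - d := by
  cases x <;> simp

def getDAddMonoidHom : NS →+ ℕ where
  toFun x := x.getD 0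
  map_zero' := rfl
  map_add' a b := by cases a <;> cases b <;> simp [add_def_s6, NS.add]

lemma getD_sum_s6 {ι : Type*} (s : Finset ι) (f : ι → NS) :
    (∑ i ∈ s, f i).getD 0 = ∑ i ∈ s, (f i).getD 0 :=
  map_sum getDAddMonoidHom f s

lemma add_eq_none_iff {a b : NS} : a + b = none ↔ a = none ∧ b = none := by
  cases a <;> cases b <;> simp [add_def_s6, NS.add]

lemma sum_eq_none_iff {ι : Type*} (s : Finset ι) (f : ι → NS) :
    ∑ i ∈ s, f i = none ↔ ∀ i ∈ s, f i = none := by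
  classical
  induction s using Finset.induction with
  | empty => simp; rfl
  | insert a s ha ih => simp [Finset.sum_insert ha, add_eq_none_iff, ih]

lemma le_sum {ι : Type*} (s : Finset ι) {f g : ι → NS} (h : ∀ i ∈ s, NS.le (f i) (g i)) :
    NS.le (∑ i ∈ s, f i) (∑ i ∈ s, g i) := by
  simp only [le_iff] at h ⊢
  refine ⟨?_, ?_⟩
  · simp only [sum_eq_none_iff]
    exact forall₂_congr fun i hi => (h i hi).1
  · simp only [getD_sum_s6]
    exact Finset.sum_le_sum fun i hi => (h i hi).2

lemma le_sum_map_sub {ι : Type*} (s : Finset ι) {x : NS} {f : ι → NS} (d : ι → ℕ)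
    (h : NS.le x (∑ i ∈ s, f i)) (hslack : x.getD 0 + ∑ i ∈ s, d i ≤ ∑ i ∈ s, (f i).getD 0) :
    NS.le x (∑ i ∈ s, (f i).map (· - d i)) := by
  rw [le_iff] at h ⊢
  refine ⟨?_, ?_⟩
  · simpa [sum_eq_none_iff] using h.1
  · have : ∑ i ∈ s, (f i).getD 0 ≤ ∑ i ∈ s, ((f i).getD 0 - d i) + ∑ i ∈ s, d i := by
      rw [← Finset.sum_add_distrib]
      exact Finset.sum_le_sum fun i _ => le_tsub_add
    simp only [getD_sum_s6, getD_map_sub]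
    omega

end NS

theorem sum_le_of_tight_marginals {α β γ : Type*} [Fintype α] [Fintype β] [Fintype γ]
    (a : α → β → γ → ℕ) (b₁ : α → β → ℕ) (b₂ : β → γ → ℕ)
    (h : ∀ i j k, 0 < a i j k → ∑ k', a i j k' ≤ b₁ i j ∨ ∑ i', a i' j k ≤ b₂ j k) :
    ∑ i, ∑ j, ∑ k, a i j k ≤ ∑ i, ∑ j, b₁ i j + ∑ j, ∑ k, b₂ j k := by
  classical
  set R : α → β → Prop := fun i j => ∑ k', a i j k' ≤ b₁ i j
  set C : β → γ → Prop := fun j k => ∑ i', a i' j k ≤ b₂ j k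
  have hcell : ∀ i j k,
      a i j k ≤ (if R i j then a i j k else 0) + (if C j k then a i j k else 0) := by
    intro i j k
    rcases (a i j k).eq_zero_or_pos with h0 | hpos
    · simp [h0]
    · rcases h i j k hpos with hR | hC <;> simp_all [R, C]
  have hrows : ∑ i, ∑ j, ∑ k, (if R i j then a i j k else 0) ≤ ∑ i, ∑ j, b₁ i j := by
    refine Finset.sum_le_sum fun i _ => Finset.sum_le_sum fun j _ => ?_
    rw [Finset.sum_ite_irrel]
    split_ifs with hR
    exacts [hR, by simp]
  have hcols : ∑ i, ∑ j, ∑ k, (if C j k then a i j k else 0) ≤ ∑ j, ∑ k, b₂ j k := by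
    rw [Finset.sum_comm]
    refine Finset.sum_le_sum fun j _ => ?_
    rw [Finset.sum_comm]
    refine Finset.sum_le_sum fun k _ => ?_
    rw [Finset.sum_ite_irrel]
    split_ifs with hC
    exacts [hC, by simp]
  calc ∑ i, ∑ j, ∑ k, a i j k
      ≤ ∑ i, ∑ j, ∑ k, ((if R i j then a i j k else 0) + (if C j k then a i j k else 0)) :=
        Finset.sum_le_sum fun i _ => Finset.sum_le_sum fun j _ =>
          Finset.sum_le_sum fun k _ => hcell i j k
    _ = ∑ i, ∑ j, ∑ k, (if R i j then a i j k else 0)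
          + ∑ i, ∑ j, ∑ k, (if C j k then a i j k else 0) := by
        simp only [Finset.sum_add_distrib]
    _ ≤ _ := add_le_add hrows hcols

namespace TF

variable {Q L : Type} [Fintype Q]

def IsProdWitness (t₁ t₂ t : TF Q L) (H : Q → Q → Q → NS) : Prop :=
  (∀ q1 q3, ∑ q2, H q1 q2 q3 = t.f q1 q3) ∧
    (∀ q1 q2, NS.le (t₁.f q1 q2) (∑ q3, H q1 q2 q3)) ∧
    (∀ q2 q3, NS.le (t₂.f q2 q3) (∑ q1, H q1 q2 q3))

lemma IsProdWitness.weight_eq {t₁ t₂ t : TF Q L} {H : Q → Q → Q → NS}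
    (hH : IsProdWitness t₁ t₂ t H) : t.weight = ∑ i, ∑ j, ∑ k, (H i j k).getD 0 := by
  simp only [weight, ← hH.1, NS.getD_sum_s6]
  exact Finset.sum_congr rfl fun i _ => Finset.sum_comm

lemma sum_eq_of_minimalIn_prod {t₁ t₂ t : TF Q L} (h : MinimalIn (prod t₁ t₂) t)
    {H : Q → Q → Q → NS}
    (h₁ : ∀ q1 q2, NS.le (t₁.f q1 q2) (∑ q3, H q1 q2 q3))
    (h₂ : ∀ q2 q3, NS.le (t₂.f q2 q3) (∑ q1, H q1 q2 q3))
    (hle : ∀ q1 q3, NS.le (∑ q2, H q1 q2 q3) (t.f q1 q3)) (q1 q3 : Q) :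
    ∑ q2, H q1 q2 q3 = t.f q1 q3 := by
  obtain ⟨⟨hctrl, hsrc, hdst, -⟩, hmin⟩ := h
  have := hmin ⟨fun q1 q3 => ∑ q2, H q1 q2 q3, t.src, t.dst⟩
    ⟨hctrl, hsrc, hdst, H, fun _ _ => rfl, h₁, h₂⟩ ⟨rfl, rfl, hle⟩
  exact congrFun (congrFun (congrArg TF.f this) q1) q3

lemma IsProdWitness.tight {t₁ t₂ t : TF Q L} (h : MinimalIn (prod t₁ t₂) t)
    {H : Q → Q → Q → NS} (hH : IsProdWitness t₁ t₂ t H) (i j k : Q)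
    (hpos : 0 < (H i j k).getD 0) :
    ∑ k', (H i j k').getD 0 ≤ (t₁.f i j).getD 0 ∨
      ∑ i', (H i' j k).getD 0 ≤ (t₂.f j k).getD 0 := by
  classical
  by_contra! ⟨hrow, hcol⟩
  -- Lowering `H` by one at `(i, j, k)` keeps both constraints and strictly lowers `t` at `(i, k)`.
  set δ : Q → Q → Q → ℕ := fun x y z => if x = i ∧ y = j ∧ z = k then 1 else 0
  have hrowδ : ∀ x y, ∑ z, δ x y z = if x = i ∧ y = j then 1 else 0 := by
    intro x y
    by_cases hx : x = i <;> by_cases hy : y = j <;> simp [δ, hx, hy]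
  have hcolδ : ∀ y z, ∑ x, δ x y z = if y = j ∧ z = k then 1 else 0 := by
    intro y z
    by_cases hy : y = j <;> by_cases hz : z = k <;> simp [δ, hy, hz]
  have heq := sum_eq_of_minimalIn_prod h (H := fun x y z => (H x y z).map (· - δ x y z))
    ?_ ?_ ?_ i k
  · have hsum := congrArg (Option.getD · 0) (heq.trans (hH.1 i k).symm)
    simp only [NS.getD_sum_s6, NS.getD_map_sub] at hsum
    refine (Finset.sum_lt_sum (fun y _ => tsub_le_self) ⟨j, Finset.mem_univ _, ?_⟩).ne hsum
    simp only [δ, and_self, if_true]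
    omega
  · intro x y
    refine NS.le_sum_map_sub _ _ (hH.2.1 x y) ?_
    have hle₁ := (NS.le_iff.1 (hH.2.1 x y)).2
    rw [NS.getD_sum_s6] at hle₁
    rw [hrowδ]
    split_ifs with hxy
    · obtain ⟨rfl, rfl⟩ := hxy; omega
    · omega
  · intro y z
    refine NS.le_sum_map_sub _ _ (hH.2.2 y z) ?_
    have hle₂ := (NS.le_iff.1 (hH.2.2 y z)).2
    rw [NS.getD_sum_s6] at hle₂
    rw [hcolδ]
    split_ifs with hyz
    · obtain ⟨rfl, rfl⟩ := hyz; omega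
    · omega
  · intro x z
    rw [← hH.1 x z]
    exact NS.le_sum _ fun y _ => NS.map_le (fun _ => tsub_le_self) _

end TF

/-- Every minimal element of `tf1 ⊗ tf2` has weight at most
`weight tf1 + weight tf2`. -/
theorem weight_of_minimal_prod {Q L : Type} [Fintype Q]
    (tf1 tf2 tf : TF Q L)
    (h : MinimalIn (TF.prod tf1 tf2) tf) :
    tf.weight ≤ tf1.weight + tf2.weight := by
  obtain ⟨H, hH⟩ : ∃ H, tf1.IsProdWitness tf2 tf H := h.1.2.2.2
  rw [hH.weight_eq]
  exact sum_le_of_tight_marginals _ _ _ (hH.tight h)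
end

section
/- For all g1, g2 : Q² → ℕ ∪ {#} such that ∑_{q1} g1(q1,q2) = ∑_{q3} g2(q2,q3) for every q2, there exists H : Q³ → ℕ ∪ {#} such that ∑_{q3} H(q1,q2,q3) = g1(q1,q2) for all q1,q2 and ∑_{q1} H(q1,q2,q3) = g2(q2,q3) for all q2,q3. -/
/-!
For fixed `q2` this is a transportation problem: find a `Q × Q` matrix over `ℕ ∪ {#}` with row
sums `g1 (·, q2)` and column sums `g2 (q2, ·)`. Over `ℕ`, margins `r`, `c` with equal totals are
realised by any bijection `e` between `Σ i, Fin (r i)` and `Σ j, Fin (c j)`: entry `(i, j)` counts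
the units of row `i` that `e` sends to column `j`. For `ℕ ∪ {#}`, solve the problem for the
underlying natural numbers (reading `#` as `0`) and put `#` on every row and column whose margin
is `#`. A row whose margin is not `#` still meets a column whose margin is not `#`, because the
totals agree and a sum is `#` only when all its summands are; so its sum is not `#` either.
-/

open Finset

theorem Finset.sum_card_filter_and_eq {α ι κ : Type*} [Fintype α] [Fintype κ] [DecidableEq ι]
    [DecidableEq κ] (f : α → ι) (g : α → κ) (i : ι) :
    ∑ j, #{x | f x = i ∧ g x = j} = #{x | f x = i} := by
  rw [card_eq_sum_card_fiberwise (f := g) (t := univ) (fun _ _ => mem_univ _)]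
  simp only [filter_filter]

theorem Finset.card_filter_sigma_fst_eq {ι : Type*} {β : ι → Type*} [Fintype (Σ i, β i)]
    [DecidableEq ι] (i : ι) [Fintype (β i)] :
    #{x : Σ i, β i | x.1 = i} = Fintype.card (β i) := by
  rw [← Fintype.card_subtype]
  exact Fintype.card_congr (Equiv.sigmaSubtype i)

theorem Nat.exists_matrix_with_margins {ι κ : Type*} [Fintype ι] [Fintype κ]
    (r : ι → ℕ) (c : κ → ℕ) (h : ∑ i, r i = ∑ j, c j) :
    ∃ N : ι → κ → ℕ, (∀ i, ∑ j, N i j = r i) ∧ ∀ j, ∑ i, N i j = c j := by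
  classical
  obtain ⟨e⟩ : Nonempty ((Σ i, Fin (r i)) ≃ Σ j, Fin (c j)) :=
    Fintype.card_eq.mp (by simp [h])
  refine ⟨fun i j => #{x | x.1 = i ∧ (e x).1 = j}, fun i => ?_, fun j => ?_⟩
  · rw [sum_card_filter_and_eq]
    exact (card_filter_sigma_fst_eq i).trans (Fintype.card_fin _)
  · calc ∑ i, #{x | x.1 = i ∧ (e x).1 = j}
        = #{x | (e x).1 = j} := by
          simpa only [and_comm] using sum_card_filter_and_eq (fun x => (e x).1) Sigma.fst j
      _ = #{y : Σ j, Fin (c j) | y.1 = j} := card_equiv e (by simp)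
      _ = c j := (card_filter_sigma_fst_eq j).trans (Fintype.card_fin _)

namespace NS

def toNat : NS →+ ℕ where
  toFun x := x.getD 0
  map_zero' := rfl
  map_add' a b := by
    change (NS.add a b).getD 0 = _
    cases a <;> cases b <;> simp [NS.add]

theorem add_eq_zero {a b : NS} : a + b = 0 ↔ a = 0 ∧ b = 0 := by
  change NS.add a b = none ↔ a = none ∧ b = none
  cases a <;> cases b <;> simp [NS.add]

theorem sum_eq_zero_iff {ι : Type*} (s : Finset ι) (f : ι → NS) :
    ∑ i ∈ s, f i = 0 ↔ ∀ i ∈ s, f i = 0 := by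
  induction s using Finset.cons_induction with
  | empty => simp
  | cons a s ha ih => simp [Finset.sum_cons, add_eq_zero, ih]

theorem eq_of_toNat_eq {x y : NS} (h0 : x = 0 ↔ y = 0) (h : toNat x = toNat y) : x = y := by
  change x = none ↔ y = none at h0
  cases x <;> cases y <;> simp_all [toNat]

section Margins

variable {ι κ : Type*}

def ofNatMatrix (r : ι → NS) (c : κ → NS) (N : ι → κ → ℕ) (i : ι) (j : κ) : NS :=
  if r i = 0 ∨ c j = 0 then 0 else some (N i j)

theorem ofNatMatrix_transpose (r : ι → NS) (c : κ → NS) (N : ι → κ → ℕ) (i : ι) (j : κ) :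
    ofNatMatrix r c N i j = ofNatMatrix c r (fun j i => N i j) j i := by
  simp only [ofNatMatrix, or_comm]

variable [Fintype ι] [Fintype κ]

theorem toNat_ofNatMatrix {r : ι → NS} {c : κ → NS} {N : ι → κ → ℕ}
    (hrow : ∀ i, ∑ j, N i j = toNat (r i)) (hcol : ∀ j, ∑ i, N i j = toNat (c j))
    (i : ι) (j : κ) : toNat (ofNatMatrix r c N i j) = N i j := by
  by_cases hr : r i = 0
  · have hN : ∑ j, N i j = 0 := by rw [hrow, hr, map_zero]
    simp [ofNatMatrix, hr, Finset.sum_eq_zero_iff.mp hN j]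
  by_cases hc : c j = 0
  · have hN : ∑ i, N i j = 0 := by rw [hcol, hc, map_zero]
    simp [ofNatMatrix, hc, Finset.sum_eq_zero_iff.mp hN i]
  simp [ofNatMatrix, hc, hr, toNat]

theorem sum_ofNatMatrix_row {r : ι → NS} {c : κ → NS} {N : ι → κ → ℕ}
    (h : ∑ i, r i = ∑ j, c j) (hrow : ∀ i, ∑ j, N i j = toNat (r i))
    (hcol : ∀ j, ∑ i, N i j = toNat (c j)) (i : ι) :
    ∑ j, ofNatMatrix r c N i j = r i := by
  by_cases hr : r i = 0
  · rw [hr]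
    exact Finset.sum_eq_zero fun j _ => by simp [ofNatMatrix, hr]
  obtain ⟨j, hc⟩ : ∃ j, c j ≠ 0 := by
    by_contra! hc
    have hsum : ∑ i, r i = 0 := h ▸ (sum_eq_zero_iff _ _).mpr fun j _ => hc j
    exact hr ((sum_eq_zero_iff _ _).mp hsum i (Finset.mem_univ i))
  refine eq_of_toNat_eq ⟨fun hsum => ?_, fun h => absurd h hr⟩ ?_
  · have := (sum_eq_zero_iff _ _).mp hsum j (Finset.mem_univ j)
    simp [ofNatMatrix, hr, hc] at this
  · rw [map_sum, ← hrow]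
    exact Finset.sum_congr rfl fun j _ => toNat_ofNatMatrix hrow hcol i j

theorem sum_ofNatMatrix_col {r : ι → NS} {c : κ → NS} {N : ι → κ → ℕ}
    (h : ∑ i, r i = ∑ j, c j) (hrow : ∀ i, ∑ j, N i j = toNat (r i))
    (hcol : ∀ j, ∑ i, N i j = toNat (c j)) (j : κ) :
    ∑ i, ofNatMatrix r c N i j = c j := by
  simp only [ofNatMatrix_transpose r c]
  exact sum_ofNatMatrix_row h.symm hcol hrow j

end Margins

theorem exists_matrix_with_margins {ι κ : Type*} [Fintype ι] [Fintype κ]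
    (r : ι → NS) (c : κ → NS) (h : ∑ i, r i = ∑ j, c j) :
    ∃ M : ι → κ → NS, (∀ i, ∑ j, M i j = r i) ∧ ∀ j, ∑ i, M i j = c j := by
  obtain ⟨N, hrow, hcol⟩ := Nat.exists_matrix_with_margins (toNat ∘ r) (toNat ∘ c)
    (by simp only [Function.comp, ← map_sum, h])
  exact ⟨ofNatMatrix r c N, sum_ofNatMatrix_row h hrow hcol, sum_ofNatMatrix_col h hrow hcol⟩

end NS

/-- For all `g1, g2 : Q² → ℕ ∪ {#}` such that
`∑_{q1} g1(q1,q2) = ∑_{q3} g2(q2,q3)` for every `q2`, there exists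
`H : Q³ → ℕ ∪ {#}` with `∑_{q3} H(q1,q2,q3) = g1(q1,q2)` and
`∑_{q1} H(q1,q2,q3) = g2(q2,q3)`. -/
theorem exists_threeway_witness {Q : Type} [Fintype Q]
    (g1 g2 : Q → Q → NS)
    (h : ∀ q2, (∑ q1, g1 q1 q2) = ∑ q3, g2 q2 q3) :
    ∃ H : Q → Q → Q → NS,
      (∀ q1 q2, (∑ q3, H q1 q2 q3) = g1 q1 q2) ∧
      (∀ q2 q3, (∑ q1, H q1 q2 q3) = g2 q2 q3) := by
  choose M hrow hcol using fun q2 => NS.exists_matrix_with_margins (g1 · q2) (g2 q2) (h q2)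
  exact ⟨fun q1 q2 q3 => M q2 q1 q3, fun q1 q2 => hrow q2 q1, hcol⟩
end

section
/- Let h : Q³ → ℕ ∪ {#} and g1, g2 : Q² → ℕ ∪ {#} satisfy: ∑_{q3} h(q1,q2,q3) ≥ g1(q1,q2) for all q1,q2; ∑_{q1} h(q1,q2,q3) ≥ g2(q2,q3) for all q2,q3; and ∑_{q1,q2,q3} h(q1,q2,q3) > ∑_{q1,q2} g1(q1,q2) + ∑_{q2,q3} g2(q2,q3). Then there exist states q1*, q2*, q3* such that ∑_{q3} h(q1*,q2*,q3) > g1(q1*,q2*) and ∑_{q1} h(q1,q2*,q3*) > g2(q2*,q3*). -/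

def NS.val : NS → ℕ
  | none => 0
  | some a => a

def NS.valHom : NS →+ ℕ where
  toFun := NS.val
  map_zero' := rfl
  map_add' x y := by cases x <;> cases y <;> simp [NS.val] <;> rfl

lemma NS.val_le_of_le {x y : NS} (hle : NS.le x y) : x.val ≤ y.val := by
  cases x <;> cases y <;> simp_all [NS.le, NS.val]

lemma NS.val_lt_of_lt {x y : NS} (hlt : NS.lt x y) : x.val < y.val := by
  obtain ⟨hle, hne⟩ := hlt
  cases x <;> cases y <;> simp_all [NS.le, NS.val]
  exact lt_of_le_of_ne hle (by simpa using hne)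

lemma NS.lt_of_le_of_val_lt {x y : NS} (hle : NS.le x y) (hv : x.val < y.val) :
    NS.lt x y := ⟨hle, fun e => by subst e; exact lt_irrefl _ hv⟩

lemma NS.eq_of_le_not_lt {x y : NS} (hle : NS.le x y) (hn : ¬ NS.lt x y) : x = y := by
  by_contra hne
  exact hn ⟨hle, hne⟩

/-- If `h : Q³ → ℕ ∪ {#}` dominates `g1` on its first two coordinates and `g2`
on its last two coordinates, and its total sum strictly exceeds the sum of the
totals of `g1` and `g2`, then some entries of `g1` and `g2` (sharing the state
`q2*`) are strictly dominated. -/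
theorem exists_strictly_dominated_entries {Q : Type} [Fintype Q]
    (h : Q → Q → Q → NS) (g1 g2 : Q → Q → NS)
    (h1 : ∀ q1 q2, NS.le (g1 q1 q2) (∑ q3, h q1 q2 q3))
    (h2 : ∀ q2 q3, NS.le (g2 q2 q3) (∑ q1, h q1 q2 q3))
    (hsum : NS.lt ((∑ q1, ∑ q2, g1 q1 q2) + (∑ q2, ∑ q3, g2 q2 q3))
      (∑ q1, ∑ q2, ∑ q3, h q1 q2 q3)) :
    ∃ q1s q2s q3s,
      NS.lt (g1 q1s q2s) (∑ q3, h q1s q2s q3) ∧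
      NS.lt (g2 q2s q3s) (∑ q1, h q1 q2s q3s) := by
  by_contra hcon
  push_neg at hcon
  have key : ∀ q2 : Q,
      (∑ q1, ∑ q3, (h q1 q2 q3).val) ≤
      (∑ q1, (g1 q1 q2).val) + (∑ q3, (g2 q2 q3).val) := by
    intro q2
    by_cases hex : ∃ q1, NS.lt (g1 q1 q2) (∑ q3, h q1 q2 q3)
    · obtain ⟨q1s, hq1s⟩ := hex
      have heq : ∀ q3, (g2 q2 q3).val = (∑ q1, h q1 q2 q3).val := by
        intro q3
        have := hcon q1s q2 q3 hq1s
        exact congrArg NS.val (NS.eq_of_le_not_lt (h2 q2 q3) this)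
      have : (∑ q3, (g2 q2 q3).val) = ∑ q1, ∑ q3, (h q1 q2 q3).val := by
        rw [Finset.sum_comm]
        refine Finset.sum_congr rfl fun q3 _ => ?_
        rw [heq q3]
        exact map_sum NS.valHom (fun q1 => h q1 q2 q3) Finset.univ
      omega
    · push_neg at hex
      have : (∑ q1, (g1 q1 q2).val) = ∑ q1, ∑ q3, (h q1 q2 q3).val := by
        refine Finset.sum_congr rfl fun q1 _ => ?_
        rw [congrArg NS.val (NS.eq_of_le_not_lt (h1 q1 q2) (hex q1))]
        exact map_sum NS.valHom (fun q3 => h q1 q2 q3) Finset.univ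
      omega
  have hv := NS.val_lt_of_lt hsum
  have hval : ∀ {s : Finset Q} (f : Q → NS), (∑ x ∈ s, f x).val = ∑ x ∈ s, (f x).val :=
    fun f => map_sum NS.valHom f _
  rw [show ((∑ q1, ∑ q2, g1 q1 q2) + (∑ q2, ∑ q3, g2 q2 q3)).val
      = ((∑ q1, ∑ q2, g1 q1 q2)).val + ((∑ q2, ∑ q3, g2 q2 q3)).val from
      NS.valHom.map_add _ _] at hv
  simp only [hval] at hv
  have htot : (∑ q1, ∑ q2, ∑ q3, (h q1 q2 q3).val)
      ≤ (∑ q1, ∑ q2, (g1 q1 q2).val) + (∑ q2, ∑ q3, (g2 q2 q3).val) := by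
    calc (∑ q1, ∑ q2, ∑ q3, (h q1 q2 q3).val)
        = ∑ q2, ∑ q1, ∑ q3, (h q1 q2 q3).val := Finset.sum_comm
      _ ≤ ∑ q2, ((∑ q1, (g1 q1 q2).val) + (∑ q3, (g2 q2 q3).val)) :=
          Finset.sum_le_sum fun q2 _ => key q2
      _ = (∑ q2, ∑ q1, (g1 q1 q2).val) + (∑ q2, ∑ q3, (g2 q2 q3).val) :=
          Finset.sum_add_distrib
      _ = (∑ q1, ∑ q2, (g1 q1 q2).val) + (∑ q2, ∑ q3, (g2 q2 q3).val) := by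
          rw [Finset.sum_comm]
  omega
end
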